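/- The homomorphism b: K₀(Λ) → K₀(Ω) defined on classes of finitely generated projective Λ-modules by b([P]) = [k ⊗_R P] is injective. -/

import Mathlib

/-! ### Grothendieck groups `G₀` and `K₀` of a ring

`G0 S` is the Grothendieck group of the category of finitely generated (left) `S`-modules:
the free abelian group on (bundled) finitely generated `S`-modules modulo the relation
`[B] = [A] + [C]` for every short exact sequence `0 → A → B → C → 0`.

`K0 S` is the Grothendieck group of the category of finitely generated projective (left)
`S`-modules: the free abelian group on bundled finitely generated projective `S`-modules
modulo the relations `[B] = [A] + [C]` whenever `B ≅ A ⊕ C`. -/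

/-- A bundled finitely generated (left) module over the ring `S`. -/
structure FGMod (S : Type) [Ring S] : Type 1 where
  carrier : Type
  [isAddCommGroup : AddCommGroup carrier]
  [isModule : Module S carrier]
  [isFinite : Module.Finite S carrier]

attribute [instance] FGMod.isAddCommGroup FGMod.isModule FGMod.isFinite

/-- A bundled finitely generated projective (left) module over the ring `S`. -/
structure PMod (S : Type) [Ring S] : Type 1 where
  carrier : Type
  [isAddCommGroup : AddCommGroup carrier]
  [isModule : Module S carrier]
  [isFinite : Module.Finite S carrier]
  [isProjective : Module.Projective S carrier]

attribute [instance] PMod.isAddCommGroup PMod.isModule PMod.isFinite PMod.isProjective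

/-- The Grothendieck group of the category of finitely generated `S`-modules. -/
def G0 (S : Type) [Ring S] : Type 1 :=
  FreeAbelianGroup (FGMod S) ⧸ AddSubgroup.closure
    {x | ∃ (A B C : FGMod S) (f : A.carrier →ₗ[S] B.carrier) (g : B.carrier →ₗ[S] C.carrier),
      Function.Injective f ∧ Function.Surjective g ∧ Function.Exact f g ∧
      x = FreeAbelianGroup.of B - FreeAbelianGroup.of A - FreeAbelianGroup.of C}

noncomputable instance (S : Type) [Ring S] : AddCommGroup (G0 S) :=
  QuotientAddGroup.Quotient.addCommGroup _

/-- The class `[M]` of a finitely generated `S`-module `M` in `G0 S`. -/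
def G0.cls (S : Type) [Ring S] (M : Type) [AddCommGroup M] [Module S M]
    [Module.Finite S M] : G0 S :=
  QuotientAddGroup.mk (FreeAbelianGroup.of (FGMod.mk M))

/-- The Grothendieck group of the category of finitely generated projective `S`-modules. -/
def K0 (S : Type) [Ring S] : Type 1 :=
  FreeAbelianGroup (PMod S) ⧸ AddSubgroup.closure
    {x | ∃ A B C : PMod S, Nonempty (B.carrier ≃ₗ[S] A.carrier × C.carrier) ∧
      x = FreeAbelianGroup.of B - FreeAbelianGroup.of A - FreeAbelianGroup.of C}

noncomputable instance (S : Type) [Ring S] : AddCommGroup (K0 S) :=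
  QuotientAddGroup.Quotient.addCommGroup _

/-- The class `[P]` of a finitely generated projective `S`-module `P` in `K0 S`. -/
def K0.cls (S : Type) [Ring S] (P : Type) [AddCommGroup P] [Module S P]
    [Module.Finite S P] [Module.Projective S P] : K0 S :=
  QuotientAddGroup.mk (FreeAbelianGroup.of (PMod.mk P))

/-- `c : K0 S → G0 S` is the Cartan homomorphism iff it sends the `K₀`-class of every
finitely generated projective module to its `G₀`-class. (Such a homomorphism exists and is
unique, since `K0 S` is generated by the classes of finitely generated projective modules.) -/
def IsCartanMap (S : Type) [Ring S] (c : K0 S →+ G0 S) : Prop :=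
  ∀ (P : Type) [AddCommGroup P] [Module S P] [Module.Finite S P] [Module.Projective S P],
    c (K0.cls S P) = G0.cls S P

/-! ### The setting of Swan's theorem (§2 of the paper)

`R` is a discrete valuation ring with maximal ideal `𝔪`, field of fractions `K` and
residue field `k = R/𝔪`; `A` is a finite dimensional `K`-algebra and `Λ` is an `R`-order
in `A`, i.e. an `R`-subalgebra of `A` which is finitely generated as an `R`-module and
spans `A` over `K`.  The ring `Ω = k ⊗_R Λ = Λ/𝔪Λ` is encoded as an abstract ring
together with a surjective ring homomorphism `π : Λ → Ω` whose kernel is `𝔪Λ`. -/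

section OrderSetting

variable (R : Type) [CommRing R] [IsDomain R] [IsDiscreteValuationRing R]
variable (K : Type) [Field K] [Algebra R K] [IsFractionRing R K]
variable (A : Type) [Ring A] [Algebra K A] [FiniteDimensional K A]
variable [Algebra R A] [IsScalarTower R K A]

/-- `Λ` is an `R`-order in the finite dimensional `K`-algebra `A`:  a subring of `A`
which is an `R`-subalgebra, finitely generated as an `R`-module, and which spans `A`
as a `K`-vector space. -/
structure IsOrder (Λ : Subalgebra R A) : Prop where
  fg : Module.Finite R Λ
  spans : Submodule.span K (Λ : Set A) = ⊤

/-- `π : Λ →+* Ω` realizes `Ω` as `k ⊗_R Λ = Λ/𝔪Λ`, the reduction of `Λ` modulo the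
maximal ideal `𝔪` of `R`:  it is surjective with kernel `𝔪Λ`. -/
structure IsResidueRing {Λ : Subalgebra R A} {Ω : Type} [Ring Ω] (π : ↥Λ →+* Ω) : Prop where
  surjective : Function.Surjective π
  ker : ∀ x : ↥Λ, π x = 0 ↔
    x ∈ (IsLocalRing.maximalIdeal R) • (⊤ : Submodule R ↥Λ)

end OrderSetting

/-- `q : P →+ W` realizes the `Ω`-module `W` as the reduction `k ⊗_R P = P/𝔪P` of the
`Λ`-module `P` modulo the maximal ideal `𝔪` of `R` (via the reduction map `π : Λ → Ω`):
it is surjective, `Λ`-equivariant and has kernel `𝔪P`. -/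
structure IsReduction (R : Type) [CommRing R] [IsLocalRing R] {Λ₀ : Type} [Ring Λ₀]
    {Ω : Type} [Ring Ω] (π : Λ₀ →+* Ω)
    {P : Type} [AddCommGroup P] [Module R P] [Module Λ₀ P]
    {W : Type} [AddCommGroup W] [Module Ω W] (q : P →+ W) : Prop where
  surjective : Function.Surjective q
  equivariant : ∀ (a : Λ₀) (m : P), q (a • m) = π a • q m
  ker : ∀ m : P, q m = 0 ↔ m ∈ (IsLocalRing.maximalIdeal R) • (⊤ : Submodule R P)

/-!
Write `x ∈ K₀(Λ)` as `[P] - [Q]`. If `b x = 0` then `[P/𝔪P] = [Q/𝔪Q]` in `K₀(Ω)`, and equality in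
`K₀` is stable isomorphism (read off from the group completion of the monoid of isomorphism
classes): `Ωᵐ × P/𝔪P ≅ Ωᵐ × Q/𝔪Q` for some `m`. These are the reductions of `Λᵐ × P` and
`Λᵐ × Q`, and an isomorphism between reductions of finitely generated projective `Λ`-modules
lifts to an isomorphism of the modules themselves, by projectivity and Nakayama's lemma over
the local ring `R` (`Λ` being finite over `R`). Hence `[P] = [Q]`.
-/

namespace PMod

variable (S : Type) [Ring S]

instance isoSetoid : Setoid (PMod S) where
  r P Q := Nonempty (P.carrier ≃ₗ[S] Q.carrier)
  iseqv := ⟨fun _ => ⟨LinearEquiv.refl _ _⟩, fun ⟨e⟩ => ⟨e.symm⟩, fun ⟨e⟩ ⟨f⟩ => ⟨e.trans f⟩⟩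

abbrev IsoClass : Type 1 := Quotient (isoSetoid S)

variable {S}

noncomputable instance : Add (IsoClass S) where
  add := Quotient.map₂ (fun P Q => PMod.mk (P.carrier × Q.carrier))
    fun _ _ ⟨e⟩ _ _ ⟨f⟩ => ⟨e.prodCongr f⟩

instance : Zero (IsoClass S) := ⟨⟦PMod.mk PUnit⟧⟩

noncomputable instance : AddCommMonoid (IsoClass S) where
  add_assoc := by
    rintro ⟨P⟩ ⟨Q⟩ ⟨M⟩
    exact Quotient.sound ⟨LinearEquiv.prodAssoc S P.carrier Q.carrier M.carrier⟩
  zero_add := by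
    rintro ⟨P⟩
    exact Quotient.sound ⟨LinearEquiv.uniqueProd⟩
  add_zero := by
    rintro ⟨P⟩
    exact Quotient.sound ⟨LinearEquiv.prodUnique⟩
  add_comm := by
    rintro ⟨P⟩ ⟨Q⟩
    exact Quotient.sound ⟨LinearEquiv.prodComm S P.carrier Q.carrier⟩
  nsmul := nsmulRec

end PMod

theorem Module.Projective.exists_prod_linearEquiv_pi (S X : Type) [Ring S] [AddCommGroup X]
    [Module S X] [Module.Finite S X] [Module.Projective S X] :
    ∃ (Y : Type) (_ : AddCommGroup Y) (_ : Module S Y) (m : ℕ),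
      Nonempty ((Y × X) ≃ₗ[S] (Fin m → S)) := by
  obtain ⟨m, f, hf⟩ := Module.Finite.exists_fin' S X
  obtain ⟨l, hl⟩ := f.exists_rightInverse_of_surjective (LinearMap.range_eq_top.2 hf)
  obtain ⟨e, -⟩ := f.exact_subtype_ker_map.splitSurjectiveEquiv Subtype.val_injective ⟨l, hl⟩
  exact ⟨LinearMap.ker f, inferInstance, inferInstance, m, ⟨e.symm⟩⟩

namespace K0

variable {S : Type} [Ring S]

theorem cls_eq_add_of_linearEquiv {A B C : Type}
    [AddCommGroup A] [Module S A] [Module.Finite S A] [Module.Projective S A]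
    [AddCommGroup B] [Module S B] [Module.Finite S B] [Module.Projective S B]
    [AddCommGroup C] [Module S C] [Module.Finite S C] [Module.Projective S C]
    (e : B ≃ₗ[S] A × C) : K0.cls S B = K0.cls S A + K0.cls S C := by
  rw [← sub_eq_zero, sub_add_eq_sub_sub]
  exact (QuotientAddGroup.eq_zero_iff _).2
    (AddSubgroup.subset_closure ⟨PMod.mk A, PMod.mk B, PMod.mk C, ⟨e⟩, rfl⟩)

theorem cls_prod (P Q : Type)
    [AddCommGroup P] [Module S P] [Module.Finite S P] [Module.Projective S P]
    [AddCommGroup Q] [Module S Q] [Module.Finite S Q] [Module.Projective S Q] :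
    K0.cls S (P × Q) = K0.cls S P + K0.cls S Q :=
  cls_eq_add_of_linearEquiv (LinearEquiv.refl S (P × Q))

theorem cls_eq_of_linearEquiv_prod {P Q M : Type}
    [AddCommGroup P] [Module S P] [Module.Finite S P] [Module.Projective S P]
    [AddCommGroup Q] [Module S Q] [Module.Finite S Q] [Module.Projective S Q]
    [AddCommGroup M] [Module S M] [Module.Finite S M] [Module.Projective S M]
    (e : (M × P) ≃ₗ[S] (M × Q)) : K0.cls S P = K0.cls S Q :=
  add_left_cancel ((cls_prod M P).symm.trans (cls_eq_add_of_linearEquiv e))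

theorem exists_eq_cls_sub_cls (x : K0 S) :
    ∃ P Q : PMod S, x = K0.cls S P.carrier - K0.cls S Q.carrier := by
  obtain ⟨y, rfl⟩ := QuotientAddGroup.mk_surjective x
  induction y using FreeAbelianGroup.induction_on with
  | zero => exact ⟨PMod.mk S, PMod.mk S, (sub_self _).symm⟩
  | of P =>
    refine ⟨PMod.mk (P.carrier × S), PMod.mk S, ?_⟩
    rw [cls_prod, add_sub_cancel_right]
    rfl
  | neg P _ =>
    refine ⟨PMod.mk S, PMod.mk (P.carrier × S), ?_⟩
    rw [cls_prod, sub_add_cancel_right]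
    rfl
  | add y z hy hz =>
    obtain ⟨P, Q, hy⟩ := hy
    obtain ⟨P', Q', hz⟩ := hz
    refine ⟨PMod.mk (P.carrier × P'.carrier), PMod.mk (Q.carrier × Q'.carrier), ?_⟩
    rw [QuotientAddGroup.mk_add, hy, hz, cls_prod, cls_prod]
    abel

open Algebra in
noncomputable def toGrothendieckAddGroup : K0 S →+ GrothendieckAddGroup (PMod.IsoClass S) :=
  QuotientAddGroup.lift _ (FreeAbelianGroup.lift fun P => GrothendieckAddGroup.of ⟦P⟧) <| by
    refine (AddSubgroup.closure_le _).2 ?_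
    rintro _ ⟨A, B, C, ⟨e⟩, rfl⟩
    have hB : (⟦B⟧ : PMod.IsoClass S) = ⟦A⟧ + ⟦C⟧ := Quotient.sound ⟨e⟩
    simp [hB]

theorem toGrothendieckAddGroup_cls (P : Type) [AddCommGroup P] [Module S P] [Module.Finite S P]
    [Module.Projective S P] :
    toGrothendieckAddGroup (K0.cls S P) = Algebra.GrothendieckAddGroup.of ⟦PMod.mk P⟧ :=
  FreeAbelianGroup.lift_apply_of _ _

theorem exists_linearEquiv_prod_of_cls_eq {P Q : Type}
    [AddCommGroup P] [Module S P] [Module.Finite S P] [Module.Projective S P]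
    [AddCommGroup Q] [Module S Q] [Module.Finite S Q] [Module.Projective S Q]
    (h : K0.cls S P = K0.cls S Q) :
    ∃ X : PMod S, Nonempty ((X.carrier × P) ≃ₗ[S] (X.carrier × Q)) := by
  have h' := congrArg toGrothendieckAddGroup h
  rw [toGrothendieckAddGroup_cls, toGrothendieckAddGroup_cls] at h'
  obtain ⟨⟨⟨X⟩, _⟩, hX⟩ := (AddLocalization.addMonoidOf ⊤).eq_iff_exists.1 h'
  exact ⟨X, Quotient.exact hX⟩

theorem exists_linearEquiv_pi_prod_of_cls_eq {P Q : Type}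
    [AddCommGroup P] [Module S P] [Module.Finite S P] [Module.Projective S P]
    [AddCommGroup Q] [Module S Q] [Module.Finite S Q] [Module.Projective S Q]
    (h : K0.cls S P = K0.cls S Q) :
    ∃ m : ℕ, Nonempty (((Fin m → S) × P) ≃ₗ[S] ((Fin m → S) × Q)) := by
  obtain ⟨X, ⟨e⟩⟩ := exists_linearEquiv_prod_of_cls_eq h
  obtain ⟨Y, _, _, m, ⟨f⟩⟩ := Module.Projective.exists_prod_linearEquiv_pi S X.carrier
  exact ⟨m, ⟨f.symm.prodCongr (.refl S P) ≪≫ₗ LinearEquiv.prodAssoc S Y X.carrier P ≪≫ₗ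
    (LinearEquiv.refl S Y).prodCongr e ≪≫ₗ (LinearEquiv.prodAssoc S Y X.carrier Q).symm ≪≫ₗ
    f.prodCongr (.refl S Q)⟩⟩

end K0

section SmulTop

variable {R : Type} [CommSemiring R] (I : Ideal R)

theorem Submodule.mem_smul_top_prod_iff {M N : Type} [AddCommMonoid M] [Module R M]
    [AddCommMonoid N] [Module R N] (x : M × N) :
    x ∈ I • (⊤ : Submodule R (M × N)) ↔
      x.1 ∈ I • (⊤ : Submodule R M) ∧ x.2 ∈ I • (⊤ : Submodule R N) := by
  refine ⟨fun hx => ⟨smul_top_le_comap_smul_top I (LinearMap.fst R M N) hx,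
    smul_top_le_comap_smul_top I (LinearMap.snd R M N) hx⟩, fun ⟨h₁, h₂⟩ => ?_⟩
  rw [← Prod.fst_add_snd x]
  exact add_mem (smul_top_le_comap_smul_top I (LinearMap.inl R M N) h₁)
    (smul_top_le_comap_smul_top I (LinearMap.inr R M N) h₂)

theorem Submodule.mem_smul_top_pi_iff {ι : Type} [Finite ι] {M : Type}
    [AddCommMonoid M] [Module R M] (x : ι → M) :
    x ∈ I • (⊤ : Submodule R (ι → M)) ↔ ∀ i, x i ∈ I • (⊤ : Submodule R M) := by
  refine ⟨fun hx i => smul_top_le_comap_smul_top I (LinearMap.proj i) hx, fun h => ?_⟩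
  classical
  cases nonempty_fintype ι
  rw [← Finset.univ_sum_single x]
  exact sum_mem fun i _ => smul_top_le_comap_smul_top I (LinearMap.single R (fun _ => M) i) (h i)

variable {Λ₀ P : Type} [Semiring Λ₀] [Algebra R Λ₀] [AddCommMonoid P] [Module R P] [Module Λ₀ P]
  [IsScalarTower R Λ₀ P]

theorem Submodule.smul_mem_smul_top (a : Λ₀) {x : P} (hx : x ∈ I • (⊤ : Submodule R P)) :
    a • x ∈ I • (⊤ : Submodule R P) :=
  smul_top_le_comap_smul_top I (DistribSMul.toLinearMap R P a) hx

theorem Submodule.smul_mem_smul_top_of_mem {a : Λ₀} (ha : a ∈ I • (⊤ : Submodule R Λ₀)) (x : P) :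
    a • x ∈ I • (⊤ : Submodule R P) :=
  smul_top_le_comap_smul_top I ((LinearMap.toSpanSingleton Λ₀ P x).restrictScalars R) ha

end SmulTop

theorem exists_module_isScalarTower (R A M : Type) [CommSemiring R] [Semiring A] [Algebra R A]
    [AddCommMonoid M] [Module A M] : ∃ _ : Module R M, IsScalarTower R A M :=
  letI := Module.compHom M (algebraMap R A)
  ⟨_, .of_algebraMap_smul fun _ _ => rfl⟩

namespace IsReduction

open IsLocalRing

variable {R : Type} [CommRing R] [IsLocalRing R] {Λ₀ : Type} [Ring Λ₀]
  {Ω : Type} [Ring Ω] {π : Λ₀ →+* Ω}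
  {P P' W W' : Type} [AddCommGroup P] [Module R P] [Module Λ₀ P]
  [AddCommGroup P'] [Module R P'] [Module Λ₀ P']
  [AddCommGroup W] [Module Ω W] [AddCommGroup W'] [Module Ω W']
  {q : P →+ W} {q' : P' →+ W'}

theorem prodMap (hq : IsReduction R π q) (hq' : IsReduction R π q') :
    IsReduction R π (q.prodMap q') where
  surjective := hq.surjective.prodMap hq'.surjective
  equivariant a x := Prod.ext (hq.equivariant a x.1) (hq'.equivariant a x.2)
  ker x := by
    rw [Submodule.mem_smul_top_prod_iff, ← hq.ker, ← hq'.ker, Prod.ext_iff]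
    rfl

theorem compLeft (hq : IsReduction R π q) (ι : Type) [Finite ι] :
    IsReduction R π (q.compLeft ι) where
  surjective := hq.surjective.comp_left
  equivariant a x := funext fun i => hq.equivariant a (x i)
  ker x := by
    rw [Submodule.mem_smul_top_pi_iff, funext_iff]
    exact forall_congr' fun i => hq.ker (x i)

theorem exists_linearMap [SMul R Λ₀] [IsScalarTower R Λ₀ P] [IsScalarTower R Λ₀ P']
    (hπ : Function.Surjective π) (hq : IsReduction R π q) (hq' : IsReduction R π q')
    (f : P →ₗ[Λ₀] P') : ∃ F : W →ₗ[Ω] W', ∀ p, F (q p) = q' (f p) := by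
  have hker : q.ker ≤ (q'.comp f.toAddMonoidHom).ker := fun p hp =>
    (hq'.ker _).2 <| Submodule.smul_top_le_comap_smul_top _ (f.restrictScalars R) ((hq.ker p).1 hp)
  let F := q.liftOfRightInverse _ (Function.rightInverse_surjInv hq.surjective) ⟨_, hker⟩
  have hF : ∀ p, F (q p) = q' (f p) := q.liftOfRightInverse_comp_apply _ _ ⟨_, hker⟩
  refine ⟨{ F with map_smul' := fun ω w => ?_ }, hF⟩
  obtain ⟨a, rfl⟩ := hπ ω
  obtain ⟨p, rfl⟩ := hq.surjective w
  simp only [ZeroHom.toFun_eq_coe, AddMonoidHom.toZeroHom_coe, RingHom.id_apply]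
  rw [← hq.equivariant, hF, hF, map_smul, hq'.equivariant]

theorem exists_lift (hq : IsReduction R π q) (hq' : IsReduction R π q')
    [Module.Projective Λ₀ P] (f : W →ₗ[Ω] W') :
    ∃ ψ : P →ₗ[Λ₀] P', ∀ p, q' (ψ p) = f (q p) := by
  let := Module.compHom W' π
  let q'Λ : P' →ₗ[Λ₀] W' := { q' with map_smul' := hq'.equivariant }
  let fqΛ : P →ₗ[Λ₀] W' :=
    { toFun := f ∘ q
      map_add' := by simp
      map_smul' := fun a p => show f (q (a • p)) = π a • f (q p) by
        rw [hq.equivariant, map_smul] }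
  obtain ⟨ψ, hψ⟩ := Module.projective_lifting_property q'Λ fqΛ hq'.surjective
  exact ⟨ψ, LinearMap.congr_fun hψ⟩

theorem surjective_of_surjective_comp {M N V : Type} [AddCommGroup M] [Module R M]
    [AddCommGroup N] [Module R N] [Module Λ₀ N] [Module.Finite R N] [AddCommGroup V] [Module Ω V]
    {q : N →+ V} (hq : IsReduction R π q) (ψ : M →ₗ[R] N) (h : Function.Surjective (q ∘ ψ)) :
    Function.Surjective ψ := by
  rw [← LinearMap.range_eq_top, eq_top_iff]
  refine Submodule.le_of_le_smul_of_le_jacobson_bot Module.Finite.fg_top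
    (maximalIdeal_le_jacobson ⊥) fun y _ => ?_
  obtain ⟨p, hp⟩ := h (q y)
  have hy : y - ψ p ∈ maximalIdeal R • (⊤ : Submodule R N) := by
    rw [← hq.ker, map_sub, ← hp, Function.comp_apply, sub_self]
  exact Submodule.mem_sup.2 ⟨ψ p, ⟨p, rfl⟩, y - ψ p, hy, add_sub_cancel _ _⟩

section

variable [Algebra R Λ₀] [IsScalarTower R Λ₀ P] [IsScalarTower R Λ₀ P']

theorem finite (hq : IsReduction R π q) (hπ : IsReduction R π π.toAddMonoidHom)
    [Module.Finite Λ₀ P] : Module.Finite Ω W := by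
  obtain ⟨n, f, hf⟩ := Module.Finite.exists_fin' Λ₀ P
  obtain ⟨F, hF⟩ := (hπ.compLeft (Fin n)).exists_linearMap hπ.surjective hq f
  refine Module.Finite.of_surjective F fun w => ?_
  obtain ⟨x, rfl⟩ := (hq.surjective.comp hf) w
  exact ⟨_, hF x⟩

/-- The reduction of a direct summand of `Λ₀ⁿ` is a direct summand of `Ωⁿ`. -/
theorem projective (hq : IsReduction R π q) (hπ : IsReduction R π π.toAddMonoidHom)
    [Module.Finite Λ₀ P] [Module.Projective Λ₀ P] : Module.Projective Ω W := by
  obtain ⟨n, f, hf⟩ := Module.Finite.exists_fin' Λ₀ P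
  obtain ⟨g, hg⟩ := f.exists_rightInverse_of_surjective (LinearMap.range_eq_top.2 hf)
  have hπn := hπ.compLeft (Fin n)
  obtain ⟨F, hF⟩ := hπn.exists_linearMap hπ.surjective hq f
  obtain ⟨G, hG⟩ := hq.exists_linearMap hπ.surjective hπn g
  refine Module.Projective.of_split G F (LinearMap.ext fun w => ?_)
  obtain ⟨p, rfl⟩ := hq.surjective w
  rw [LinearMap.comp_apply, hG, hF, ← LinearMap.comp_apply, hg, LinearMap.id_apply,
    LinearMap.id_apply]

/-- Lift `e` and `e⁻¹` to `ψ` and `φ`: by Nakayama both are surjective, and the surjective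
endomorphism `φ ∘ ψ` of the finitely generated `R`-module `P` is injective. -/
theorem nonempty_linearEquiv [Module.Finite R Λ₀]
    [Module.Finite Λ₀ P] [Module.Projective Λ₀ P] [Module.Finite Λ₀ P'] [Module.Projective Λ₀ P']
    (hq : IsReduction R π q) (hq' : IsReduction R π q') (e : W ≃ₗ[Ω] W') :
    Nonempty (P ≃ₗ[Λ₀] P') := by
  have := Module.Finite.trans (R := R) Λ₀ P
  have := Module.Finite.trans (R := R) Λ₀ P'
  obtain ⟨ψ, hψ⟩ := hq.exists_lift hq' e.toLinearMap
  obtain ⟨φ, hφ⟩ := hq'.exists_lift hq e.symm.toLinearMap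
  have hψs : Function.Surjective ψ := hq'.surjective_of_surjective_comp (ψ.restrictScalars R)
    fun w => by simpa [hψ] using (e.surjective.comp hq.surjective) w
  have hφs : Function.Surjective φ := hq.surjective_of_surjective_comp (φ.restrictScalars R)
    fun w => by simpa [hφ] using (e.symm.surjective.comp hq'.surjective) w
  have hφψ : Function.Injective (φ ∘ ψ) := OrzechProperty.injective_of_surjective_endomorphism
    ((φ ∘ₗ ψ).restrictScalars R) (hφs.comp hψs)
  exact ⟨LinearEquiv.ofBijective ψ ⟨hφψ.of_comp, hψs⟩⟩

end

end IsReduction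

section Construction

variable {R : Type} [CommRing R] [IsLocalRing R] {Λ₀ : Type} [Ring Λ₀] [Algebra R Λ₀]
  {Ω : Type} [Ring Ω] {π : Λ₀ →+* Ω}

open IsLocalRing in
/-- The reduction is `P/𝔪P`; `Λ₀` acts on it through `π` because `ker π = 𝔪Λ₀`. -/
theorem exists_isReduction (hπ : IsReduction R π π.toAddMonoidHom) (P : Type) [AddCommGroup P]
    [Module R P] [Module Λ₀ P] [IsScalarTower R Λ₀ P] :
    ∃ (W : Type) (_ : AddCommGroup W) (_ : Module Ω W) (q : P →+ W), IsReduction R π q := by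
  let N : Submodule Λ₀ P :=
    { toAddSubmonoid := (maximalIdeal R • ⊤ : Submodule R P).toAddSubmonoid
      smul_mem' := fun a _ hx => Submodule.smul_mem_smul_top (maximalIdeal R) a hx }
  have hπs : Function.Surjective π := hπ.surjective
  let : SMul Ω (P ⧸ N) := ⟨fun ω w => Function.surjInv hπs ω • w⟩
  have hsmul : ∀ (a : Λ₀) (w : P ⧸ N), π a • w = a • w := by
    intro a w
    obtain ⟨p, rfl⟩ := Submodule.Quotient.mk_surjective N w
    change Function.surjInv hπs (π a) • Submodule.Quotient.mk (p := N) p = _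
    rw [← Submodule.Quotient.mk_smul, ← Submodule.Quotient.mk_smul, Submodule.Quotient.eq,
      ← sub_smul]
    refine Submodule.smul_mem_smul_top_of_mem (maximalIdeal R) ((hπ.ker _).1 ?_) p
    simp [Function.surjInv_eq hπs]
  let := hπs.moduleLeft π hsmul
  refine ⟨P ⧸ N, inferInstance, inferInstance, N.mkQ.toAddMonoidHom,
    ⟨N.mkQ_surjective, fun a p => ?_, fun p => Submodule.Quotient.mk_eq_zero N⟩⟩
  simp [hsmul]

theorem exists_isReduction_of_projective (hπ : IsReduction R π π.toAddMonoidHom) (P : Type)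
    [AddCommGroup P] [Module Λ₀ P] [Module.Finite Λ₀ P] [Module.Projective Λ₀ P] :
    ∃ (_ : Module R P) (_ : IsScalarTower R Λ₀ P) (W : Type) (_ : AddCommGroup W)
      (_ : Module Ω W) (_ : Module.Finite Ω W) (_ : Module.Projective Ω W) (q : P →+ W),
      IsReduction R π q := by
  obtain ⟨_, _⟩ := exists_module_isScalarTower R Λ₀ P
  obtain ⟨W, _, _, q, hq⟩ := exists_isReduction hπ P
  exact ⟨_, inferInstance, W, _, _, hq.finite hπ, hq.projective hπ, q, hq⟩

end Construction

theorem K0_reduction_injective_general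
    (R : Type) [CommRing R] [IsDomain R] [IsDiscreteValuationRing R]
    (K : Type) [Field K]
    (A : Type) [Ring A] [Algebra K A]
    [Algebra R A]
    (Λ : Subalgebra R A) (hΛ : IsOrder R K A Λ)
    (Ω : Type) [Ring Ω] (π : ↥Λ →+* Ω) (hπ : IsResidueRing R A π)
    (b : K0 ↥Λ →+ K0 Ω)
    (hb : ∀ (P : Type) [AddCommGroup P] [Module R P] [Module ↥Λ P]
      [IsScalarTower R ↥Λ P] [Module.Finite ↥Λ P] [Module.Projective ↥Λ P]
      (W : Type) [AddCommGroup W] [Module Ω W] [Module.Finite Ω W] [Module.Projective Ω W]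
      (q : P →+ W), IsReduction R π q → b (K0.cls ↥Λ P) = K0.cls Ω W) :
    Function.Injective b := by
  have hπ' : IsReduction R π π.toAddMonoidHom := ⟨hπ.surjective, map_mul π, hπ.ker⟩
  have := hΛ.fg
  rw [injective_iff_map_eq_zero]
  intro x hx
  obtain ⟨P, Q, rfl⟩ := K0.exists_eq_cls_sub_cls x
  obtain ⟨_, _, WP, _, _, _, _, qP, hqP⟩ := exists_isReduction_of_projective hπ' P.carrier
  obtain ⟨_, _, WQ, _, _, _, _, qQ, hqQ⟩ := exists_isReduction_of_projective hπ' Q.carrier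
  rw [map_sub, hb _ _ qP hqP, hb _ _ qQ hqQ, sub_eq_zero] at hx
  obtain ⟨m, ⟨e⟩⟩ := K0.exists_linearEquiv_pi_prod_of_cls_eq hx
  have hπm := hπ'.compLeft (Fin m)
  obtain ⟨e'⟩ := (hπm.prodMap hqP).nonempty_linearEquiv (hπm.prodMap hqQ) e
  exact sub_eq_zero.2 (K0.cls_eq_of_linearEquiv_prod e')

/-- **Injectivity of `b : K₀(Λ) → K₀(Ω)`** (first part of Proposition 2.5 of the paper).

In the setting of an `R`-order `Λ` (with `R` a discrete valuation ring with maximal ideal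
`𝔪` and fraction field `K`) in a finite dimensional `K`-algebra `A`, with
`Ω = k ⊗_R Λ = Λ/𝔪Λ`:  the homomorphism `b : K₀(Λ) → K₀(Ω)` determined on classes of
finitely generated projective `Λ`-modules by `b([P]) = [k ⊗_R P] = [P/𝔪P]` is injective.
(The reduction `k ⊗_R P` is encoded by a surjective `Λ`-equivariant additive map
`q : P → W` onto an `Ω`-module `W` with kernel `𝔪P`.) -/
theorem K0_reduction_injective
    (R : Type) [CommRing R] [IsDomain R] [IsDiscreteValuationRing R]
    (K : Type) [Field K] [Algebra R K] [IsFractionRing R K]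
    (A : Type) [Ring A] [Algebra K A] [FiniteDimensional K A]
    [Algebra R A] [IsScalarTower R K A]
    (Λ : Subalgebra R A) (hΛ : IsOrder R K A Λ)
    (Ω : Type) [Ring Ω] (π : ↥Λ →+* Ω) (hπ : IsResidueRing R A π)
    (b : K0 ↥Λ →+ K0 Ω)
    (hb : ∀ (P : Type) [AddCommGroup P] [Module R P] [Module ↥Λ P]
      [IsScalarTower R ↥Λ P] [Module.Finite ↥Λ P] [Module.Projective ↥Λ P]
      (W : Type) [AddCommGroup W] [Module Ω W] [Module.Finite Ω W] [Module.Projective Ω W]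
      (q : P →+ W), IsReduction R π q → b (K0.cls ↥Λ P) = K0.cls Ω W) :
    Function.Injective b :=
  K0_reduction_injective_general R K A Λ hΛ Ω π hπ b hb
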